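/- Any transition P →⟨W ▹ R,I,P'⟩ Q of an RS process [M] derived by the SOS rules satisfies R ⊆ W and W ∩ I = ∅ (Lemma 4: on top-level systems, all required reactants are available and no inhibitor is present). -/
import Mathlib


/-- Context processes `K ::= 0 | X | C.K | K+K | rec X. K` (de Bruijn variables). -/
inductive Ctx (α : Type) : Type where
  | nil : Ctx α
  | var : ℕ → Ctx α
  | pre : Finset α → Ctx α → Ctx α
  | choice : Ctx α → Ctx α → Ctx α
  | mu : Ctx α → Ctx α

/-- Substitution of the context `T` for the variable of de Bruijn index `d`. -/
def Ctx.subst {α : Type} (d : ℕ) (T : Ctx α) : Ctx α → Ctx α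
  | .nil => .nil
  | .var n => if n = d then T else .var n
  | pre C K => .pre C (Ctx.subst d T K)
  | .choice K₁ K₂ => .choice (Ctx.subst d T K₁) (Ctx.subst d T K₂)
  | .mu K => .mu (Ctx.subst (d + 1) T K)

/-- Mixture processes `M ::= (R,I,P) | D | K | M|M`. -/
inductive Mix (α : Type) : Type where
  | reaction : Finset α → Finset α → Finset α → Mix α
  | entities : Finset α → Mix α
  | ctx : Ctx α → Mix α
  | par : Mix α → Mix α → Mix α

/-- A transition label `⟨W ▹ R, I, P⟩`. -/
structure Label (α : Type) where
  W : Finset α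
  R : Finset α
  I : Finset α
  P : Finset α

/-- SOS transitions of context processes: rules (Cxt), (Rec), (Suml), (Sumr). -/
inductive CtxStep {α : Type} : Ctx α → Label α → Ctx α → Prop where
  | cxt (C : Finset α) (K : Ctx α) : CtxStep (.pre C K) ⟨C, ∅, ∅, ∅⟩ K
  | unfold {K : Ctx α} {l K'} : CtxStep (Ctx.subst 0 (.mu K) K) l K' → CtxStep (.mu K) l K'
  | suml {K₁ K₂ l K'} : CtxStep K₁ l K' → CtxStep (.choice K₁ K₂) l K'
  | sumr {K₁ K₂ l K'} : CtxStep K₂ l K' → CtxStep (.choice K₁ K₂) l K'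

/-- SOS transitions of mixture processes: rules (Ent), (Cxt), (Pro), (Inh), (Par).
Reactions are assumed well formed: `R ∩ I = ∅`. -/
inductive MixStep {α : Type} [DecidableEq α] : Mix α → Label α → Mix α → Prop where
  | ent (D : Finset α) : MixStep (.entities D) ⟨D, ∅, ∅, ∅⟩ (.entities ∅)
  | ctx {K l K'} : CtxStep K l K' → MixStep (.ctx K) l (.ctx K')
  | pro {R I P : Finset α} : R ∩ I = ∅ →
      MixStep (.reaction R I P) ⟨∅, R, I, P⟩ (.par (.reaction R I P) (.entities P))
  | inh {R I P J Q : Finset α} : R ∩ I = ∅ → J ⊆ I → Q ⊆ R → (J ∪ Q).Nonempty →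
      MixStep (.reaction R I P) ⟨∅, J, Q, ∅⟩ (.reaction R I P)
  | par {M₁ l₁ M₁' M₂ l₂ M₂'} : MixStep M₁ l₁ M₁' → MixStep M₂ l₂ M₂' →
      (l₁.W ∪ l₂.W ∪ l₁.R ∪ l₂.R) ∩ (l₁.I ∪ l₂.I) = ∅ →
      MixStep (.par M₁ M₂) ⟨l₁.W ∪ l₂.W, l₁.R ∪ l₂.R, l₁.I ∪ l₂.I, l₁.P ∪ l₂.P⟩
        (.par M₁' M₂')

/-- Structural equivalence of mixtures: commutative monoid laws for `|` with unit `∅`,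
and merging of entity sets. -/
inductive StructEq {α : Type} [DecidableEq α] : Mix α → Mix α → Prop where
  | refl (M : Mix α) : StructEq M M
  | symm {M N} : StructEq M N → StructEq N M
  | trans {M N O} : StructEq M N → StructEq N O → StructEq M O
  | parComm (M N : Mix α) : StructEq (.par M N) (.par N M)
  | parAssoc (M N O : Mix α) : StructEq (.par (.par M N) O) (.par M (.par N O))
  | parUnit (M : Mix α) : StructEq (.par M (.entities ∅)) M
  | entMerge (D₁ D₂ : Finset α) :
      StructEq (.par (.entities D₁) (.entities D₂)) (.entities (D₁ ∪ D₂))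
  | parCong {M M' N N'} : StructEq M M' → StructEq N N' →
      StructEq (.par M N) (.par M' N')

/-- Rule (Sys): top-level transitions of RS processes `[M]`. -/
inductive SysStep {α : Type} [DecidableEq α] : Mix α → Label α → Mix α → Prop where
  | sys {M l M'} : MixStep M l M' → l.R ⊆ l.W → SysStep M l M'

lemma ctxStep_I_empty {α : Type} {K : Ctx α} {l K'} (h : CtxStep K l K') : l.I = ∅ := by
  induction h with
  | cxt => rfl
  | unfold _ ih => exact ih
  | suml _ ih => exact ih
  | sumr _ ih => exact ih

lemma mixStep_WI {α : Type} [DecidableEq α] {M M' : Mix α} {l : Label α}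
    (h : MixStep M l M') : l.W ∩ l.I = ∅ := by
  induction h with
  | ent => simp
  | ctx hc => simp [ctxStep_I_empty hc]
  | pro => simp
  | inh => simp
  | par h1 h2 hside ih1 ih2 =>
    apply Finset.subset_empty.mp
    rw [← hside]
    apply Finset.inter_subset_inter _ le_rfl
    intro x hx
    simp only [Finset.mem_union] at hx ⊢
    tauto

/-- Lemma 4: any top-level transition of an RS process `[M]` satisfies
`R ⊆ W` and `W ∩ I = ∅`. -/
theorem sys_reactants_available_inhibitors_absent {α : Type} [DecidableEq α]
    {M M' : Mix α} {l : Label α} (h : SysStep M l M') :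
    l.R ⊆ l.W ∧ l.W ∩ l.I = ∅ := by
  rcases h with ⟨hm, hRW⟩; exact ⟨hRW, mixStep_WI hm⟩
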